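/- Let M be a Hilbert C*-module over A and {w_t}_{t=1}^∞ a sequence in M. Define inductively, for ε = 0: q̂_t = w_t − Σ_{s<t} q_s⟨q_s, w_t⟩, and q_t = q̂_t·b̂_t (a normalization of q̂_t) if q̂_t ≠ 0, q_t = 0 otherwise. Then {q_t}_{t=1}^∞ (after discarding zero vectors) is an orthonormal system in M, and the closed A-linear span of {q_t} contains every w_t. In particular, if the A-linear span of {w_t} is dense in M, then {q_t} is an orthonormal basis of M. -/

import Mathlib

open scoped Matrix.Norms.L2Operator ComplexOrder

/-- A Hilbert C*-module over the C*-algebra `ℂ^{m×m}` of `m × m` complex matrices (with the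
operator norm): a right module with a matrix-valued inner product inducing the norm of `M`. -/
structure HilbertModuleMat (m : ℕ) (M : Type*) [NormedAddCommGroup M] where
  smul : M → Matrix (Fin m) (Fin m) ℂ → M
  inner : M → M → Matrix (Fin m) (Fin m) ℂ
  smul_add_vec : ∀ (u v : M) c, smul (u + v) c = smul u c + smul v c
  smul_add_alg : ∀ (u : M) c d, smul u (c + d) = smul u c + smul u d
  smul_mul : ∀ (u : M) c d, smul u (c * d) = smul (smul u c) d
  smul_one : ∀ u : M, smul u 1 = u
  inner_add_right : ∀ u v w : M, inner u (v + w) = inner u v + inner u w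
  inner_smul_right : ∀ (u v : M) c, inner u (smul v c) = inner u v * c
  inner_conj : ∀ u v : M, inner v u = star (inner u v)
  inner_self_posSemidef : ∀ u : M, (inner u u).PosSemidef
  inner_definite : ∀ u : M, inner u u = 0 → u = 0
  norm_eq : ∀ u : M, ‖u‖ = Real.sqrt ‖inner u u‖

/-- A vector `q` is *normalized* if `⟨q,q⟩` is a nonzero idempotent. -/
def HilbertModuleMat.Normalized {m : ℕ} {M : Type*} [NormedAddCommGroup M]
    (h : HilbertModuleMat m M) (q : M) : Prop :=
  h.inner q q ≠ 0 ∧ h.inner q q * h.inner q q = h.inner q q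

/-- The closure of the `ℂ^{m×m}`-submodule spanned by a sequence. -/
def spanClosureSeq {m : ℕ} {M : Type*} [NormedAddCommGroup M] (h : HilbertModuleMat m M)
    (q : ℕ → M) : Set M :=
  closure {v : M | ∃ (s : Finset ℕ) (c : ℕ → Matrix (Fin m) (Fin m) ℂ),
    v = ∑ t ∈ s, h.smul (q t) (c t)}

/-!
For a normalized `q` the idempotent `⟨q,q⟩` acts as the identity on the left of `⟨q,x⟩`, so
`⟨q_s, Σ_{i<t} q_i⟨q_i,w_t⟩⟩ = ⟨q_s,w_t⟩` whenever the earlier `q_i` are orthogonal to `q_s`.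
Hence, by strong induction, `q̂_t` and its right multiple `q_t` are orthogonal to every earlier
`q_s`. Conversely `w_t = q_t b + Σ_{s<t} q_s⟨q_s,w_t⟩` lies in the algebraic span of the `q`'s,
so the span of the `w`'s is contained in that of the `q`'s, which gives both the closure
statement and density.
-/

namespace HilbertModuleMat

variable {m : ℕ} {M : Type*} [NormedAddCommGroup M] (h : HilbertModuleMat m M)

def innerRight (u : M) : M →+ Matrix (Fin m) (Fin m) ℂ :=
  AddMonoidHom.mk' (h.inner u) (h.inner_add_right u)

def smulRight (c : Matrix (Fin m) (Fin m) ℂ) : M →+ M :=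
  AddMonoidHom.mk' (fun u => h.smul u c) (fun u v => h.smul_add_vec u v c)

def smulLeft (u : M) : Matrix (Fin m) (Fin m) ℂ →+ M :=
  AddMonoidHom.mk' (h.smul u) (h.smul_add_alg u)

lemma inner_zero_right (u : M) : h.inner u 0 = 0 :=
  map_zero (h.innerRight u)

lemma inner_zero_left (u : M) : h.inner 0 u = 0 := by
  rw [h.inner_conj, h.inner_zero_right, star_zero]

lemma inner_sub_right (u v x : M) : h.inner u (v - x) = h.inner u v - h.inner u x :=
  map_sub (h.innerRight u) v x

lemma inner_sum_right {ι : Type*} (u : M) (s : Finset ι) (f : ι → M) :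
    h.inner u (∑ i ∈ s, f i) = ∑ i ∈ s, h.inner u (f i) :=
  map_sum (h.innerRight u) f s

lemma zero_smul (c : Matrix (Fin m) (Fin m) ℂ) : h.smul 0 c = 0 :=
  map_zero (h.smulRight c)

lemma smul_zero (u : M) : h.smul u 0 = 0 :=
  map_zero (h.smulLeft u)

lemma sum_smul {ι : Type*} (s : Finset ι) (f : ι → M) (c : Matrix (Fin m) (Fin m) ℂ) :
    h.smul (∑ i ∈ s, f i) c = ∑ i ∈ s, h.smul (f i) c :=
  map_sum (h.smulRight c) f s

lemma inner_smul_left (u v : M) (c : Matrix (Fin m) (Fin m) ℂ) :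
    h.inner (h.smul u c) v = star c * h.inner u v := by
  rw [h.inner_conj, h.inner_smul_right, star_mul, ← h.inner_conj]

/-- Since `⟨q,q⟩` is idempotent, `q⟨q,q⟩ - q` has zero inner product with itself. -/
lemma smul_inner_self {q : M} (hq : h.Normalized q) : h.smul q (h.inner q q) = q := by
  set p := h.inner q q
  have hq_orth : h.inner q (h.smul q p - q) = 0 := by
    rw [h.inner_sub_right, h.inner_smul_right, hq.2, sub_self]
  have hself : h.inner (h.smul q p - q) (h.smul q p - q) = 0 := by
    rw [h.inner_sub_right, h.inner_smul_right, h.inner_conj q, hq_orth, star_zero, zero_mul,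
      sub_zero]
  exact sub_eq_zero.mp (h.inner_definite _ hself)

lemma inner_self_mul_inner {q : M} (hq : h.Normalized q) (x : M) :
    h.inner q q * h.inner q x = h.inner q x := by
  have hstar : star (h.inner q q) = h.inner q q := (h.inner_self_posSemidef q).1
  conv_lhs => rw [← hstar, ← h.inner_smul_left, h.smul_inner_self hq]

lemma inner_sub_sum_smul_inner_eq_zero {q : ℕ → M} {n s : ℕ} (hs : s < n)
    (hq : h.Normalized (q s)) (horth : ∀ i < n, i ≠ s → h.inner (q s) (q i) = 0) (x : M) :
    h.inner (q s) (x - ∑ i ∈ Finset.range n, h.smul (q i) (h.inner (q i) x)) = 0 := by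
  have hsum : ∑ i ∈ Finset.range n, h.inner (q s) (h.smul (q i) (h.inner (q i) x))
      = h.inner (q s) x := by
    rw [Finset.sum_eq_single_of_mem s (Finset.mem_range.mpr hs)]
    · rw [h.inner_smul_right, h.inner_self_mul_inner hq]
    · intro i hi his
      rw [h.inner_smul_right, horth i (Finset.mem_range.mp hi) his, zero_mul]
  rw [h.inner_sub_right, h.inner_sum_right, hsum, sub_self]

lemma inner_gramSchmidt_eq_zero {w q qhat : ℕ → M}
    (hqhat : ∀ t, qhat t = w t - ∑ s ∈ Finset.range t, h.smul (q s) (h.inner (q s) (w t)))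
    (hq : ∀ t, ∃ c, q t = h.smul (qhat t) c) (hnorm : ∀ t, q t ≠ 0 → h.Normalized (q t)) :
    ∀ s t, s ≠ t → h.inner (q s) (q t) = 0 := by
  have hlt : ∀ t, ∀ s < t, h.inner (q s) (q t) = 0 := by
    intro t
    induction t using Nat.strong_induction_on with
    | _ t ih =>
      intro s hst
      by_cases hqs : q s = 0
      · rw [hqs, h.inner_zero_left]
      have horth : ∀ i < t, i ≠ s → h.inner (q s) (q i) = 0 := by
        intro i hi his
        rcases his.lt_or_gt with his | hsi
        · rw [h.inner_conj, ih s hst i his, star_zero]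
        · exact ih i hi s hsi
      obtain ⟨c, hc⟩ := hq t
      rw [hc, h.inner_smul_right, hqhat t,
        h.inner_sub_sum_smul_inner_eq_zero hst (hnorm s hqs) horth, zero_mul]
  intro s t hst
  rcases hst.lt_or_gt with hst | hts
  · exact hlt t s hst
  · rw [h.inner_conj, hlt s t hts, star_zero]

/-- `spanClosureSeq h q` is definitionally `closure (h.span q)`. -/
def span (q : ℕ → M) : AddSubmonoid M where
  carrier := {v | ∃ (s : Finset ℕ) (c : ℕ → Matrix (Fin m) (Fin m) ℂ),
    v = ∑ t ∈ s, h.smul (q t) (c t)}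
  zero_mem' := ⟨∅, 0, by simp⟩
  add_mem' := by
    classical
    rintro _ _ ⟨s₁, c₁, rfl⟩ ⟨s₂, c₂, rfl⟩
    have hextend : ∀ (s : Finset ℕ) (c : ℕ → Matrix (Fin m) (Fin m) ℂ), s ⊆ s₁ ∪ s₂ →
        ∑ t ∈ s, h.smul (q t) (c t)
          = ∑ t ∈ s₁ ∪ s₂, h.smul (q t) (if t ∈ s then c t else 0) := by
      intro s c hs
      rw [← Finset.sum_subset hs fun t _ ht => by rw [if_neg ht, h.smul_zero]]
      exact Finset.sum_congr rfl fun t ht => by rw [if_pos ht]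
    refine ⟨s₁ ∪ s₂, fun t => (if t ∈ s₁ then c₁ t else 0) + (if t ∈ s₂ then c₂ t else 0), ?_⟩
    rw [hextend s₁ c₁ Finset.subset_union_left, hextend s₂ c₂ Finset.subset_union_right,
      ← Finset.sum_add_distrib]
    exact Finset.sum_congr rfl fun t _ => (h.smul_add_alg _ _ _).symm

lemma smul_mem_span {q : ℕ → M} {v : M} (hv : v ∈ h.span q) (c : Matrix (Fin m) (Fin m) ℂ) :
    h.smul v c ∈ h.span q := by
  obtain ⟨s, d, rfl⟩ := hv
  refine ⟨s, fun t => d t * c, ?_⟩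
  rw [h.sum_smul]
  exact Finset.sum_congr rfl fun t _ => (h.smul_mul _ _ _).symm

lemma smul_mem_span_self (q : ℕ → M) (t : ℕ) (c : Matrix (Fin m) (Fin m) ℂ) :
    h.smul (q t) c ∈ h.span q := by
  refine ⟨{t}, fun _ => c, ?_⟩
  rw [Finset.sum_singleton]

lemma span_le_span {w q : ℕ → M} (hw : ∀ t, w t ∈ h.span q) : h.span w ≤ h.span q := by
  rintro _ ⟨s, c, rfl⟩
  exact sum_mem fun t _ => h.smul_mem_span (hw t) (c t)

end HilbertModuleMat

theorem gram_schmidt_orthonormal_general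
    {m : ℕ} {M : Type*} [NormedAddCommGroup M]
    (h : HilbertModuleMat m M) (w q qhat : ℕ → M)
    (hqhat : ∀ t, qhat t = w t - ∑ s ∈ Finset.range t, h.smul (q s) (h.inner (q s) (w t)))
    (hnz : ∀ t, qhat t ≠ 0 →
      ∃ bhat b : Matrix (Fin m) (Fin m) ℂ,
        q t = h.smul (qhat t) bhat ∧ h.Normalized (q t) ∧ h.smul (q t) b = qhat t)
    (hz : ∀ t, qhat t = 0 → q t = 0) :
    (∀ s t, s ≠ t → h.inner (q s) (q t) = 0) ∧
    (∀ t, q t ≠ 0 → h.Normalized (q t)) ∧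
    (∀ t, w t ∈ spanClosureSeq h q) ∧
    (Dense {v : M | ∃ (s : Finset ℕ) (c : ℕ → Matrix (Fin m) (Fin m) ℂ),
        v = ∑ t ∈ s, h.smul (w t) (c t)} →
      Dense {v : M | ∃ (s : Finset ℕ) (c : ℕ → Matrix (Fin m) (Fin m) ℂ),
        v = ∑ t ∈ s, h.smul (q t) (c t)}) := by
  have hnorm : ∀ t, q t ≠ 0 → h.Normalized (q t) := fun t hq => by
    obtain ⟨_, _, _, hn, _⟩ := hnz t fun h0 => hq (hz t h0)
    exact hn
  have hq : ∀ t, ∃ c, q t = h.smul (qhat t) c := fun t => by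
    by_cases h0 : qhat t = 0
    · exact ⟨0, by rw [hz t h0, h.smul_zero]⟩
    · obtain ⟨bhat, _, hbhat, _⟩ := hnz t h0
      exact ⟨bhat, hbhat⟩
  have hrec : ∀ t, ∃ b, h.smul (q t) b = qhat t := fun t => by
    by_cases h0 : qhat t = 0
    · exact ⟨0, by rw [hz t h0, h0, h.zero_smul]⟩
    · obtain ⟨_, b, _, _, hb⟩ := hnz t h0
      exact ⟨b, hb⟩
  have hw : ∀ t, w t ∈ h.span q := fun t => by
    obtain ⟨b, hb⟩ := hrec t
    rw [← sub_add_cancel (w t) (∑ s ∈ Finset.range t, _), ← hqhat t, ← hb]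
    exact add_mem (h.smul_mem_span_self q t b)
      (sum_mem fun s _ => h.smul_mem_span_self q s _)
  exact ⟨h.inner_gramSchmidt_eq_zero hqhat hq hnorm, hnorm, fun t => subset_closure (hw t),
    fun hdense => hdense.mono (h.span_le_span hw)⟩

/-- Gram–Schmidt orthonormalization with `ε = 0`: with `q̂_t = w_t − Σ_{s<t} q_s⟨q_s,w_t⟩`
and `q_t` a normalization of `q̂_t` (exactly reconstructible: `q_t·b = q̂_t`) when `q̂_t ≠ 0`,
`q_t = 0` otherwise, the sequence `{q_t}` is an orthonormal system (after discarding zeros),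
its closed span contains every `w_t`, and if the span of `{w_t}` is dense then the span of
`{q_t}` is dense (orthonormal basis). -/
theorem gram_schmidt_orthonormal
    {m : ℕ} {M : Type*} [NormedAddCommGroup M] [CompleteSpace M]
    (h : HilbertModuleMat m M) (w q qhat : ℕ → M)
    (hqhat : ∀ t, qhat t = w t - ∑ s ∈ Finset.range t, h.smul (q s) (h.inner (q s) (w t)))
    (hnz : ∀ t, qhat t ≠ 0 →
      ∃ bhat b : Matrix (Fin m) (Fin m) ℂ,
        q t = h.smul (qhat t) bhat ∧ h.Normalized (q t) ∧ h.smul (q t) b = qhat t)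
    (hz : ∀ t, qhat t = 0 → q t = 0) :
    (∀ s t, s ≠ t → h.inner (q s) (q t) = 0) ∧
    (∀ t, q t ≠ 0 → h.Normalized (q t)) ∧
    (∀ t, w t ∈ spanClosureSeq h q) ∧
    (Dense {v : M | ∃ (s : Finset ℕ) (c : ℕ → Matrix (Fin m) (Fin m) ℂ),
        v = ∑ t ∈ s, h.smul (w t) (c t)} →
      Dense {v : M | ∃ (s : Finset ℕ) (c : ℕ → Matrix (Fin m) (Fin m) ℂ),
        v = ∑ t ∈ s, h.smul (q t) (c t)}) :=
  gram_schmidt_orthonormal_general h w q qhat hqhat hnz hz
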